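/- Internal Radius Growing property: If f ∈ E^r(T^n) satisfies the hypotheses of the Main Theorem, then f verifies the I.R.G. property: there exists R_0 > 0 (depending only on f) such that for every nonempty open set U ⊆ T^n there exist a point x ∈ U and K ∈ N such that f^K(U) contains the ball of radius R_0 centered at f^K(x). -/

import Mathlib

open Metric Set
noncomputable section

/-- Euclidean covering space ℝⁿ. -/
abbrev Rn (n : ℕ) : Type := EuclideanSpace ℝ (Fin n)

/-- The n-dimensional torus Tⁿ = ℝⁿ/ℤⁿ. -/
abbrev Torus (n : ℕ) : Type := Fin n → AddCircle (1 : ℝ)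

/-- Covering projection ℝⁿ → Tⁿ. -/
def proj {n : ℕ} (x : Rn n) : Torus n := fun i => (x i : AddCircle (1 : ℝ))

/-- `F` is a lift of `f` to the universal cover. -/
def IsLift {n : ℕ} (f : Torus n → Torus n) (F : Rn n → Rn n) : Prop :=
  ∀ x, proj (F x) = f (proj x)

/-- Volume expanding: |det Df| > σ > 1 everywhere (via a lift). -/
def VolumeExpanding {n : ℕ} (F : Rn n → Rn n) : Prop :=
  ∃ σ > (1 : ℝ), ∀ x : Rn n, σ < |LinearMap.det (fderiv ℝ F x : Rn n →ₗ[ℝ] Rn n)|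

/-- Expanding on a subset S of the torus: the minimum norm of the derivative is > λ > 1. -/
def ExpandingOn {n : ℕ} (F : Rn n → Rn n) (S : Set (Torus n)) : Prop :=
  ∃ lam > (1 : ℝ), ∀ x : Rn n, proj x ∈ S → ∀ v : Rn n, lam * ‖v‖ ≤ ‖fderiv ℝ F x v‖


/-- Fundamental domain [0,1)ⁿ of the covering. -/
def FD (n : ℕ) : Set (Rn n) := {x | ∀ i, x i ∈ Set.Ico (0 : ℝ) 1}

/-- Lift of a subset of the torus restricted to the fundamental domain. -/
def liftFD {n : ℕ} (U : Set (Torus n)) : Set (Rn n) := proj ⁻¹' U ∩ FD n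

/-- Diameter of an open subset of the torus, measured on the lift to a
fundamental domain. -/
def diamT {n : ℕ} (U : Set (Torus n)) : ℝ := Metric.diam (liftFD U)

/-- sup-distance max_i |x_i - y_i| on ℝⁿ. -/
def supDist {n : ℕ} (x y : Rn n) : ℝ := ⨆ i, |x i - y i|

/-- dist(A,B) = inf over pairs of the sup-distance. -/
def distSets {n : ℕ} (A B : Set (Rn n)) : ℝ :=
  sInf {d | ∃ x ∈ A, ∃ y ∈ B, d = supDist x y}

/-- The integer vector k ∈ ℤⁿ viewed in ℝⁿ. -/
def intVec {n : ℕ} (k : Fin n → ℤ) : Rn n := WithLp.toLp 2 (fun i => (k i : ℝ))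

/-- internal diameter of U^c : min over nonzero k ∈ ℤⁿ of dist(Ũ, Ũ + k). -/
def diamInt {n : ℕ} (U : Set (Torus n)) : ℝ :=
  sInf {d | ∃ k : Fin n → ℤ, k ≠ 0 ∧
    d = distSets (liftFD U) ((fun x => x + intVec k) '' liftFD U)}

/-- An arc in the torus, given by a (lifted) parametrization on [0,1];
the projection to the torus is required to be injective. -/
structure TorusArc (n : ℕ) where
  c : ℝ → Rn n
  contOn : ContinuousOn c (Set.Icc 0 1)
  injOn : Set.InjOn (proj ∘ c) (Set.Icc 0 1)

/-- The set of points of the arc in the torus. -/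
def TorusArc.carrier {n : ℕ} (γ : TorusArc n) : Set (Torus n) :=
  (proj ∘ γ.c) '' Set.Icc 0 1

/-- The diameter of an arc, measured on its lift. -/
def TorusArc.diam {n : ℕ} (γ : TorusArc n) : ℝ := Metric.diam (γ.c '' Set.Icc 0 1)

/-- All pre-orbits of f are dense: for every x, {w : f^k(w) = x, k ∈ ℕ} is dense. -/
def PreorbitDense {n : ℕ} (f : Torus n → Torus n) : Prop :=
  ∀ x : Torus n, Dense {w : Torus n | ∃ k : ℕ, f^[k] w = x}

/-- f is topologically transitive: some forward orbit is dense. -/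
def TopTransitive {n : ℕ} (f : Torus n → Torus n) : Prop :=
  ∃ x : Torus n, Dense (Set.range fun k : ℕ => f^[k] x)

/-- ε-closeness of (lifts of) two maps in the C^r topology. -/
def CrClose {n : ℕ} (r : ℕ) (F G : Rn n → Rn n) (ε : ℝ) : Prop :=
  ∀ i ≤ r, ∀ x : Rn n, ‖iteratedFDeriv ℝ i F x - iteratedFDeriv ℝ i G x‖ < ε

/-- Λ is a (compact, invariant) expanding set for f (with lift F). -/
def ExpandingSet {n : ℕ} (f : Torus n → Torus n) (F : Rn n → Rn n)
    (Λ : Set (Torus n)) : Prop :=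
  IsCompact Λ ∧ f '' Λ = Λ ∧ ExpandingOn F Λ

/-- Λ is locally maximal (isolated) for f: it has an isolating block. -/
def LocallyMaximal {n : ℕ} (f : Torus n → Torus n) (Λ : Set (Torus n)) : Prop :=
  ∃ V : Set (Torus n), IsOpen V ∧ Λ ⊆ V ∧ Λ = ⋂ k : ℕ, f^[k] ⁻¹' closure V

/-- V is an isolating block for Λ. -/
def IsolatingBlock {n : ℕ} (f : Torus n → Torus n) (Λ V : Set (Torus n)) : Prop :=
  IsOpen V ∧ Λ ⊆ V ∧ Λ = ⋂ k : ℕ, f^[k] ⁻¹' closure V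

/-- The hypotheses of the Main Theorem on f (with lift F). -/
structure MainHyp {n : ℕ} (f : Torus n → Torus n) (F : Rn n → Rn n)
    (U0 U1 : Set (Torus n)) (δ0 : ℝ) : Prop where
  isLift : IsLift f F
  volExp : VolumeExpanding F
  preDense : PreorbitDense f
  openU0 : IsOpen U0
  diamU0 : diamT U0 < 1
  expandingOff : ExpandingOn F U0ᶜ
  δ0pos : 0 < δ0
  δ0lt : δ0 < diamInt U0
  openU1 : IsOpen U1
  nbhdU1 : closure U0 ⊆ U1
  arcHyp : ∀ γ : TorusArc n, γ.carrier ⊆ U0ᶜ → δ0 < γ.diam →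
      ∃ y ∈ γ.carrier, ∀ k : ℕ, 1 ≤ k → f^[k] y ∈ U1ᶜ
  preim : ∀ z ∈ U1ᶜ, ∃ z' ∈ U1ᶜ, f z' = z

/-- The derivative cocycle of f iterated i times, given the point-wise derivative D. -/
def Dpow {n : ℕ} (f : Torus n → Torus n) (D : Torus n → (Rn n →L[ℝ] Rn n)) :
    ℕ → Torus n → (Rn n →L[ℝ] Rn n)
  | 0, _ => ContinuousLinearMap.id ℝ (Rn n)
  | (i + 1), x => (Dpow f D i (f x)).comp (D x)


/-- The disc orthogonal to the (differentiable) curve c at parameter t, radius r, lifted. -/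
def orthoDiscLift {n : ℕ} (c : ℝ → Rn n) (t r : ℝ) : Set (Rn n) :=
  {y : Rn n | inner ℝ (y - c t) (deriv c t) = (0 : ℝ) ∧ ‖y - c t‖ ≤ r}

/-- The cylinder C(γ,r) centered at the (differentiable) arc parametrized by c with radius r. -/
def cylinder {n : ℕ} (c : ℝ → Rn n) (r : ℝ) : Set (Torus n) :=
  proj '' ⋃ t ∈ Set.Icc (0 : ℝ) 1, orthoDiscLift c t r

/-- Bottom side of the cylinder (orthogonal disc at the initial extremal point). -/
def botDisc {n : ℕ} (c : ℝ → Rn n) (r : ℝ) : Set (Torus n) := proj '' orthoDiscLift c 0 r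

/-- Top side of the cylinder (orthogonal disc at the final extremal point). -/
def topDisc {n : ℕ} (c : ℝ → Rn n) (r : ℝ) : Set (Torus n) := proj '' orthoDiscLift c 1 r

/-- A nice cylinder: simply connected, and bottom/top sides contained in the boundary. -/
def NiceCylinder {n : ℕ} (c : ℝ → Rn n) (r : ℝ) : Prop :=
  SimplyConnectedSpace ↥(cylinder c r) ∧
    botDisc c r ⊆ frontier (cylinder c r) ∧ topDisc c r ⊆ frontier (cylinder c r)

/-- Lateral border of the cylinder: boundary minus top and bottom sides. -/
def lateralBorder {n : ℕ} (c : ℝ → Rn n) (r : ℝ) : Set (Torus n) :=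
  frontier (cylinder c r) \ (botDisc c r ∪ topDisc c r)

/-- Every arc inside the cylinder going from the bottom side to the top side
has diameter at least δ. -/
def BottomToTopLarge {n : ℕ} (c : ℝ → Rn n) (r δ : ℝ) : Prop :=
  ∀ γ : TorusArc n, γ.carrier ⊆ cylinder c r →
    proj (γ.c 0) ∈ botDisc c r → proj (γ.c 1) ∈ topDisc c r → δ ≤ γ.diam

/-- Λ separates horizontally the nice cylinder C(γ,r): some connected component Λ_c of Λ
meets the cylinder across the lateral border and disconnects the cylinder. -/
def SeparatesHorizontally {n : ℕ} (Λ : Set (Torus n)) (c : ℝ → Rn n) (r : ℝ) : Prop :=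
  ∃ x ∈ Λ,
    (connectedComponentIn Λ x ∩ cylinder c r).Nonempty ∧
    (connectedComponentIn Λ x ∩ lateralBorder c r).Nonempty ∧
    ∃ p ∈ cylinder c r \ connectedComponentIn Λ x,
      ∃ q ∈ cylinder c r \ connectedComponentIn Λ x,
        q ∉ connectedComponentIn (cylinder c r \ connectedComponentIn Λ x) p


/-!
A coordinate segment starting just past `liftFD U0` avoids `U0` for a length `diamInt U0 > δ0`,
so by (H2) it contains a point `y` whose forward orbit stays in `U1ᶜ ⊆ U0ᶜ`, where `f` is
expanding; put `p = f y`. By density of pre-orbits every open `U` contains `x` with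
`f^m x = p`. Volume expansion makes the lift `F` an open map, so `F^m` maps a lift of `U` onto
a neighbourhood of a lift of `p`. Along the orbit of `p`, `DF` expands by `λ > 1`; since `DF` is
periodic, hence uniformly continuous, `F` maps every ball of radius `s ≤ ρ` centred on that
orbit onto a superset of the ball of radius `μ s`, `μ > 1`, for a fixed `ρ`. Iterating, the
image contains a ball of radius `ρ`, whose projection contains the ball of radius `ρ / (√n + 1)`
around `f^K x`.
-/

open Function

section Covering

variable {n : ℕ}

lemma abs_apply_sub_le_dist (x y : Rn n) (i : Fin n) : |x i - y i| ≤ dist x y := by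
  simpa [Real.dist_eq] using PiLp.dist_apply_le x y i

lemma norm_le_sqrt_card_mul {x : Rn n} {R : ℝ} (hR : 0 ≤ R) (h : ∀ i, |x i| ≤ R) :
    ‖x‖ ≤ √n * R := by
  calc ‖x‖ = √(∑ i, ‖x i‖ ^ 2) := EuclideanSpace.norm_eq x
    _ ≤ √(∑ _i : Fin n, R ^ 2) := by
        gcongr with i
        simpa [Real.norm_eq_abs] using h i
    _ = √n * R := by simp [Real.sqrt_mul, Real.sqrt_sq hR]

lemma lipschitzWith_proj : LipschitzWith 1 (proj : Rn n → Torus n) :=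
  LipschitzWith.of_dist_le_mul fun x y => (dist_pi_le_iff (by positivity)).2 fun i =>
    calc dist (proj x i) (proj y i) = ‖((x i - y i : ℝ) : AddCircle (1 : ℝ))‖ := by
          rw [dist_eq_norm, AddCircle.coe_sub]; rfl
      _ ≤ |x i - y i| := QuotientAddGroup.norm_mk_le_norm
      _ ≤ (1 : NNReal) * dist x y := by simpa using abs_apply_sub_le_dist x y i

lemma proj_surjective : Surjective (proj : Rn n → Torus n) := fun u =>
  ⟨WithLp.toLp 2 fun i => (u i).out, funext fun i => (u i).out_eq⟩

lemma proj_eq_proj_iff {x y : Rn n} :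
    proj x = proj y ↔ ∀ i, x i - y i ∈ AddSubgroup.zmultiples (1 : ℝ) := by
  simp only [proj, funext_iff, QuotientAddGroup.eq_iff_sub_mem, ← neg_sub (y _) (x _),
    neg_mem_iff]

lemma proj_add_intVec (z : Rn n) (k : Fin n → ℤ) : proj (z + intVec k) = proj z :=
  proj_eq_proj_iff.2 fun i => ⟨k i, by simp [intVec]⟩

lemma exists_mem_liftFD_add_intVec {U : Set (Torus n)} {z : Rn n} (hz : proj z ∈ U) :
    ∃ a ∈ liftFD U, ∃ k : Fin n → ℤ, z = a + intVec k := by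
  set a : Rn n := WithLp.toLp 2 fun i => Int.fract (z i)
  have hz_eq : z = a + intVec (fun i => ⌊z i⌋) := by
    ext i; simp [a, intVec, Int.fract_add_floor]
  refine ⟨a, ⟨?_, fun i => ⟨Int.fract_nonneg _, Int.fract_lt_one _⟩⟩, _, hz_eq⟩
  rwa [Set.mem_preimage, ← proj_add_intVec a, ← hz_eq]

lemma ball_proj_subset_image_closedBall (z : Rn n) {R : ℝ} :
    ball (proj z) R ⊆ proj '' closedBall z (√n * R) := by
  intro u hu
  have hcoord : ∀ i, ∃ t : ℝ, (t : AddCircle (1 : ℝ)) = u i - z i ∧ |t| < R := fun i => by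
    have hi : ‖u i - z i‖ < R := by
      rw [← dist_eq_norm]; exact (dist_le_pi_dist u (proj z) i).trans_lt hu
    simpa using QuotientAddGroup.norm_lt_iff.1 hi
  choose t ht htR using hcoord
  have hR : 0 ≤ R := dist_nonneg.trans (mem_ball.1 hu).le
  refine ⟨z + WithLp.toLp 2 t, ?_, funext fun i => ?_⟩
  · rw [mem_closedBall, dist_eq_norm, add_sub_cancel_left]
    exact norm_le_sqrt_card_mul hR fun i => (htR i).le
  · simp [proj, ht]

end Covering

section Lift

variable {n : ℕ} {f : Torus n → Torus n} {F : Rn n → Rn n}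

lemma IsLift.iterate (hF : IsLift f F) (k : ℕ) : IsLift f^[k] F^[k] :=
  Semiconj.iterate_right hF k

lemma IsLift.add_intVec (hF : IsLift f F) (hFc : Continuous F) (k : Fin n → ℤ) (z : Rn n) :
    F (z + intVec k) = F z + (F (intVec k) - F 0) := by
  -- each coordinate of `F (w + k) - F w` is continuous with values in `ℤ`
  have hconst : ∀ i, F (z + intVec k) i - F z i = F (0 + intVec k) i - F 0 i := fun i =>
    isPreconnected_univ.constant_of_mapsTo
      (T := (AddSubgroup.zmultiples (1 : ℝ) : Set ℝ))
      (isDiscrete_iff_discreteTopology.2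
        (inferInstanceAs (DiscreteTopology (AddSubgroup.zmultiples (1 : ℝ)))))
      (f := fun w => F (w + intVec k) i - F w i) (by fun_prop)
      (fun w _ => proj_eq_proj_iff.1 (by rw [hF, hF, proj_add_intVec]) i)
      (mem_univ z) (mem_univ 0)
  ext i
  have := hconst i
  simp only [zero_add] at this
  simp only [PiLp.add_apply, PiLp.sub_apply]
  linarith

lemma IsLift.fderiv_add_intVec (hF : IsLift f F) (hFd : Differentiable ℝ F)
    (k : Fin n → ℤ) (x : Rn n) : fderiv ℝ F (x + intVec k) = fderiv ℝ F x := by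
  have hshift : (fun z => F (z + intVec k)) = fun z => F z + (F (intVec k) - F 0) :=
    funext (hF.add_intVec hFd.continuous k)
  have := congrArg (fderiv ℝ · x) hshift
  simpa [fderiv_comp_add_right] using this

lemma uniformContinuous_of_intVec_periodic {E : Type*} [PseudoMetricSpace E] {g : Rn n → E}
    (hg : Continuous g) (hper : ∀ k x, g (x + intVec k) = g x) : UniformContinuous g := by
  have hK := (isCompact_closedBall (0 : Rn n) (√n + 1)).uniformContinuousOn_of_continuous
    hg.continuousOn
  rw [Metric.uniformContinuousOn_iff] at hK
  refine Metric.uniformContinuous_iff.2 fun ε hε => ?_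
  obtain ⟨δ, hδ, hδK⟩ := hK ε hε
  refine ⟨min δ 1, by positivity, fun {x y} hxy => ?_⟩
  -- translating by `⌊x⌋ ∈ ℤⁿ` brings both points into a fixed compact ball
  set k : Fin n → ℤ := fun i => ⌊x i⌋
  have hx : ‖x - intVec k‖ ≤ √n := by
    simpa using norm_le_sqrt_card_mul zero_le_one fun i => by
      simpa [k, intVec, abs_of_nonneg (Int.fract_nonneg (x i))] using
        (Int.fract_lt_one (x i)).le
  have hy : ‖y - intVec k‖ ≤ √n + 1 := by
    have hyx : ‖y - x‖ ≤ 1 := by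
      rw [← dist_eq_norm, dist_comm]; exact hxy.le.trans (min_le_right _ _)
    calc ‖y - intVec k‖ = ‖(y - x) + (x - intVec k)‖ := by rw [sub_add_sub_cancel]
      _ ≤ √n + 1 := by linarith [norm_add_le (y - x) (x - intVec k)]
  have hxy' : dist (x - intVec k) (y - intVec k) < δ := by
    rw [dist_sub_right]; exact hxy.trans_le (min_le_left _ _)
  have := hδK _ (by simpa using hx.trans (by linarith)) _ (by simpa using hy) hxy'
  rwa [← hper k (x - intVec k), ← hper k (y - intVec k), sub_add_cancel, sub_add_cancel] at this

end Lift

section LocalExpansion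

variable {E : Type*} [NormedAddCommGroup E] [NormedSpace ℝ E] [FiniteDimensional ℝ E]

lemma closedBall_subset_image_closedBall_of_expanding {g : E → E} (hg : Differentiable ℝ g)
    {y : E} {lam c s : ℝ} (hlam : 0 < lam) (hs : 0 ≤ s)
    (hexp : ∀ v, lam * ‖v‖ ≤ ‖fderiv ℝ g y v‖)
    (hclose : ∀ w ∈ closedBall y s, ‖fderiv ℝ g w - fderiv ℝ g y‖ ≤ c) :
    closedBall (g y) ((lam - c) * s) ⊆ g '' closedBall y s := by
  set L := fderiv ℝ g y
  have hc : 0 ≤ c := (norm_nonneg _).trans (hclose y (mem_closedBall_self hs))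
  have hinj : Injective (L : E →ₗ[ℝ] E) := (injective_iff_map_eq_zero _).2 fun v hv => by
    have := hexp v
    rw [show L v = 0 from hv, norm_zero] at this
    exact norm_le_zero_iff.1 (nonpos_of_mul_nonpos_right this hlam)
  set e := LinearEquiv.ofInjectiveEndo _ hinj
  let Linv : L.NonlinearRightInverse :=
    { toFun := e.symm
      nnnorm := lam⁻¹.toNNReal
      bound' := fun u => by
        rw [Real.coe_toNNReal _ (inv_nonneg.2 hlam.le), inv_mul_eq_div, le_div_iff₀ hlam,
          mul_comm]
        have := hexp (e.symm u)
        rwa [show L (e.symm u) = u from e.apply_symm_apply u] at this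
      right_inv' := fun u => e.apply_symm_apply u }
  have happrox : ApproximatesLinearOn g L (closedBall y s) c.toNNReal := fun u hu v hv => by
    rw [Real.coe_toNNReal _ hc]
    exact (convex_closedBall y s).norm_image_sub_le_of_norm_fderiv_le'
      (fun w _ => hg w) hclose hv hu
  have := happrox.surjOn_closedBall_of_nonlinearRightInverse Linv hs subset_rfl
  simpa [SurjOn, Linv, Real.coe_toNNReal _ hc, hlam.le] using this

lemma isOpenMap_of_det_fderiv_ne_zero {g : E → E} (hg : ContDiff ℝ 1 g)
    (hdet : ∀ x, LinearMap.det (fderiv ℝ g x : E →ₗ[ℝ] E) ≠ 0) : IsOpenMap g :=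
  isOpenMap_of_hasStrictFDerivAt_equiv
    (f' := fun x => (LinearMap.equivOfDetNeZero _ (hdet x)).toContinuousLinearEquiv)
    fun _ => hg.contDiffAt.hasStrictFDerivAt one_ne_zero

end LocalExpansion

lemma IsOpenMap.iterate {X : Type*} [TopologicalSpace X] {g : X → X} (hg : IsOpenMap g) :
    ∀ k, IsOpenMap g^[k]
  | 0 => IsOpenMap.id
  | k + 1 => (hg.iterate k).comp hg

section Growth

variable {α : Type*} [PseudoMetricSpace α] {g : α → α} {P : α → Prop} {μ ρ : ℝ}

lemma closedBall_subset_image_iterate (hμ : 1 ≤ μ)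
    (hstep : ∀ y, P y → ∀ s, 0 ≤ s → s ≤ ρ →
      closedBall (g y) (μ * s) ⊆ g '' closedBall y s) :
    ∀ (j : ℕ) (x : α), (∀ i, P (g^[i] x)) → ∀ s, 0 ≤ s → s ≤ ρ → ρ ≤ μ ^ j * s →
      closedBall (g^[j] x) ρ ⊆ g^[j] '' closedBall x s := by
  intro j
  induction j with
  | zero =>
    intro x _ s _ _ hρs
    simpa using closedBall_subset_closedBall (by simpa using hρs)
  | succ j ih =>
    intro x hP s hs hsρ hρs
    have hρ : 0 ≤ ρ := hs.trans hsρ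
    have hμj : 1 ≤ μ ^ j := one_le_pow₀ hμ
    have hs' : ρ ≤ μ ^ j * min (μ * s) ρ := by
      rcases min_cases (μ * s) ρ with ⟨h, -⟩ | ⟨h, -⟩ <;> rw [h]
      · rwa [← mul_assoc, ← pow_succ]
      · nlinarith
    calc closedBall (g^[j + 1] x) ρ
        ⊆ g^[j] '' closedBall (g x) (min (μ * s) ρ) :=
          ih (g x) (fun i => hP (i + 1)) _ (by positivity) (min_le_right _ _) hs'
      _ ⊆ g^[j] '' (g '' closedBall x s) := image_mono <|
          (closedBall_subset_closedBall (min_le_left _ _)).trans (hstep x (hP 0) s hs hsρ)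
      _ = g^[j + 1] '' closedBall x s := by rw [image_image, iterate_succ, comp_def]

lemma exists_closedBall_subset_image_iterate (hμ : 1 < μ)
    (hstep : ∀ y, P y → ∀ s, 0 ≤ s → s ≤ ρ →
      closedBall (g y) (μ * s) ⊆ g '' closedBall y s)
    {x : α} (hP : ∀ i, P (g^[i] x)) {s : ℝ} (hs : 0 < s) (hsρ : s ≤ ρ) :
    ∃ j, closedBall (g^[j] x) ρ ⊆ g^[j] '' closedBall x s := by
  obtain ⟨j, hj⟩ := pow_unbounded_of_one_lt (ρ / s) hμ
  exact ⟨j, closedBall_subset_image_iterate hμ.le hstep j x hP s hs.le hsρ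
    ((div_le_iff₀ hs).1 hj.le)⟩

end Growth

section InternalDiameter

variable {n : ℕ} {U : Set (Torus n)}

lemma supDist_le_dist (x y : Rn n) : supDist x y ≤ dist x y :=
  Real.iSup_le (abs_apply_sub_le_dist x y) dist_nonneg

lemma dist_add_smul_single (x : Rn n) (i : Fin n) (s t : ℝ) :
    dist (x + s • EuclideanSpace.single i 1) (x + t • EuclideanSpace.single i 1) = |s - t| := by
  simp [dist_eq_norm, ← sub_smul, norm_smul]

lemma diamInt_le_supDist {x y : Rn n} (hx : x ∈ liftFD U) (hy : y ∈ liftFD U)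
    {k : Fin n → ℤ} (hk : k ≠ 0) : diamInt U ≤ supDist x (y + intVec k) := by
  have hsupDist_nonneg : ∀ x y : Rn n, 0 ≤ supDist x y := fun x y =>
    Real.iSup_nonneg fun i => abs_nonneg _
  have hdist_nonneg : ∀ A B : Set (Rn n), 0 ≤ distSets A B := fun A B =>
    Real.sInf_nonneg (by rintro _ ⟨x, -, y, -, rfl⟩; exact hsupDist_nonneg x y)
  calc diamInt U ≤ distSets (liftFD U) ((· + intVec k) '' liftFD U) :=
        csInf_le ⟨0, by rintro _ ⟨k, -, rfl⟩; exact hdist_nonneg _ _⟩ ⟨k, hk, rfl⟩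
    _ ≤ supDist x (y + intVec k) :=
        csInf_le ⟨0, by rintro _ ⟨x, -, y, -, rfl⟩; exact hsupDist_nonneg x y⟩
          ⟨x, hx, _, mem_image_of_mem _ hy, rfl⟩

lemma nonempty_fin_and_liftFD_of_diamInt_pos (hU : 0 < diamInt U) :
    Nonempty (Fin n) ∧ (liftFD U).Nonempty := by
  by_contra h
  refine hU.not_ge (Real.sInf_nonpos ?_)
  rintro _ ⟨k, hk, rfl⟩
  rcases not_and_or.1 h with h | h
  · exact absurd (funext fun i => (h ⟨i⟩).elim) hk
  · rw [not_nonempty_iff_eq_empty.1 h]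
    simp [distSets]

lemma diamInt_le_one {x : Rn n} (hx : x ∈ liftFD U) (i : Fin n) : diamInt U ≤ 1 := by
  have hk : (Pi.single i 1 : Fin n → ℤ) ≠ 0 := by simp
  have hvec : intVec (Pi.single i 1) = (1 : ℝ) • EuclideanSpace.single i 1 := by
    ext j; by_cases h : j = i <;> simp [intVec, h]
  calc diamInt U ≤ supDist x (x + intVec (Pi.single i 1)) := diamInt_le_supDist hx hx hk
    _ ≤ 1 := by
      simpa [hvec] using (supDist_le_dist _ _).trans_eq (dist_add_smul_single x i 0 1)

/-- Take `a = x + (sSup S) • eᵢ`, the end of the part `S` of the coordinate line through `x` that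
lies in `liftFD U`. A point `a + t • eᵢ`, `0 < t < diamInt U`, over `U` is `y + k` with
`y ∈ liftFD U`; then `k ≠ 0`, and points of `S` close to `sSup S` contradict `diamInt U`. -/
lemma exists_segment_not_mem {x : Rn n} (hx : x ∈ liftFD U) (i : Fin n) :
    ∃ a : Rn n, ∀ t ∈ Ioo 0 (diamInt U), proj (a + t • EuclideanSpace.single i 1) ∉ U := by
  set e : Rn n := EuclideanSpace.single i 1
  set S := {t : ℝ | x + t • e ∈ liftFD U}
  have h0S : (0 : ℝ) ∈ S := by simpa [S] using hx
  have hbdd : BddAbove S := ⟨1, fun t ht => by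
    have h1 := (ht.2 i).2
    have h2 := (hx.2 i).1
    simp [e] at h1
    linarith⟩
  refine ⟨x + sSup S • e, fun t ⟨ht0, htd⟩ hU => ?_⟩
  rw [add_assoc, ← add_smul] at hU
  obtain ⟨y, hy, k, hyk⟩ := exists_mem_liftFD_add_intVec hU
  by_cases hk : k = 0
  · have hk0 : intVec k = 0 := by ext; simp [hk, intVec]
    have : sSup S + t ∈ S := by simpa [S, hyk, hk0] using hy
    linarith [le_csSup hbdd this]
  · have hsep : ∀ s ∈ S, s ≤ sSup S + t - diamInt U := fun s hs => by
      have h1 := (diamInt_le_supDist hs hy hk).trans (supDist_le_dist _ _)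
      rw [← hyk, dist_add_smul_single, abs_sub_comm,
        abs_of_nonneg (by linarith [le_csSup hbdd hs])] at h1
      linarith
    linarith [csSup_le ⟨0, h0S⟩ hsep]

end InternalDiameter

section Segment

variable {n : ℕ}

def segmentArc (a : Rn n) (i : Fin n) {L : ℝ} (hL : 0 < L) (hL1 : L < 1) : TorusArc n where
  c t := a + (t * L) • EuclideanSpace.single i 1
  contOn := by fun_prop
  injOn t ht s hs hts := by
    obtain ⟨m, hm⟩ := proj_eq_proj_iff.1 hts i
    have hm : (m : ℝ) = (t - s) * L := by simpa [sub_mul] using hm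
    have hts1 : |t - s| ≤ 1 := abs_sub_le_iff.2 ⟨by linarith [ht.2, hs.1], by linarith [hs.2, ht.1]⟩
    have hm0 : m = 0 := Int.abs_lt_one_iff.1 <| by
      have : |(t - s) * L| < 1 := by
        rw [abs_mul, abs_of_pos hL]
        nlinarith [abs_nonneg (t - s)]
      exact_mod_cast hm ▸ this
    rw [hm0, Int.cast_zero, eq_comm, mul_eq_zero, sub_eq_zero] at hm
    exact hm.resolve_right hL.ne'

lemma le_diam_segmentArc (a : Rn n) (i : Fin n) {L : ℝ} (hL : 0 < L) (hL1 : L < 1) :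
    L ≤ (segmentArc a i hL hL1).diam := by
  set γ := segmentArc a i hL hL1
  have hbdd : Bornology.IsBounded (γ.c '' Icc 0 1) :=
    (isCompact_Icc.image_of_continuousOn γ.contOn).isBounded
  have := dist_le_diam_of_mem hbdd (mem_image_of_mem γ.c (left_mem_Icc.2 zero_le_one))
    (mem_image_of_mem γ.c (right_mem_Icc.2 zero_le_one))
  change dist (a + (0 * L) • _) (a + (1 * L) • _) ≤ γ.diam at this
  rwa [dist_add_smul_single, zero_mul, one_mul, zero_sub, abs_neg, abs_of_pos hL] at this

end Segment

section Dynamics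

variable {n : ℕ} {f : Torus n → Torus n} {F : Rn n → Rn n} {U0 U1 : Set (Torus n)} {δ0 : ℝ}

lemma MainHyp.exists_forall_iterate_mem_compl (hyp : MainHyp f F U0 U1 δ0) :
    ∃ p, ∀ k, f^[k] p ∈ U0ᶜ := by
  have hd : 0 < diamInt U0 := hyp.δ0pos.trans hyp.δ0lt
  obtain ⟨⟨i⟩, x, hx⟩ := nonempty_fin_and_liftFD_of_diamInt_pos hd
  obtain ⟨a, ha⟩ := exists_segment_not_mem hx i
  have hd1 := diamInt_le_one hx i
  -- the segment `[η, η + L]` lies in `(0, diamInt U0)` and is longer than `δ0`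
  set L := (δ0 + diamInt U0) / 2 with hL_def
  set η := (diamInt U0 - δ0) / 4 with hη_def
  have hL : 0 < L := by linarith [hyp.δ0pos]
  have hL1 : L < 1 := by linarith [hyp.δ0lt]
  set e : Rn n := EuclideanSpace.single i 1
  have hcarrier : (segmentArc (a + η • e) i hL hL1).carrier ⊆ U0ᶜ := by
    rintro _ ⟨t, ht, rfl⟩
    have := ha (η + t * L)
      ⟨by nlinarith [hyp.δ0lt, ht.1], by nlinarith [hyp.δ0lt, hyp.δ0pos, ht.2]⟩
    simpa [segmentArc, add_smul, add_assoc] using this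
  obtain ⟨y, -, hy⟩ := hyp.arcHyp _ hcarrier
    ((by linarith [hyp.δ0lt] : δ0 < L).trans_le (le_diam_segmentArc _ _ hL hL1))
  refine ⟨f y, fun k => ?_⟩
  rw [← iterate_succ_apply]
  exact compl_subset_compl.2 (subset_closure.trans hyp.nbhdU1) (hy (k + 1) k.succ_pos)

lemma ExpandingOn.exists_closedBall_subset_image {S : Set (Torus n)} (hexp : ExpandingOn F S)
    (hF : IsLift f F) (hF1 : ContDiff ℝ 1 F) :
    ∃ μ > 1, ∃ ρ > 0, ∀ y, proj y ∈ S → ∀ s, 0 ≤ s → s ≤ ρ →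
      closedBall (F y) (μ * s) ⊆ F '' closedBall y s := by
  obtain ⟨lam, hlam, hlamS⟩ := hexp
  have hFd : Differentiable ℝ F := hF1.differentiable one_ne_zero
  have hDF : UniformContinuous (fderiv ℝ F) := uniformContinuous_of_intVec_periodic
    (hF1.continuous_fderiv one_ne_zero) (hF.fderiv_add_intVec hFd)
  obtain ⟨ρ, hρ, hρDF⟩ := Metric.uniformContinuous_iff.1 hDF ((lam - 1) / 2) (by linarith)
  refine ⟨lam - (lam - 1) / 2, by linarith, ρ / 2, by positivity, fun y hy s hs hsρ => ?_⟩
  refine closedBall_subset_image_closedBall_of_expanding hFd (by linarith) hs (hlamS y hy)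
    fun w hw => ?_
  rw [← dist_eq_norm]
  exact (hρDF ((mem_closedBall.1 hw).trans_lt (by linarith))).le

lemma VolumeExpanding.isOpenMap (hvol : VolumeExpanding F) (hF1 : ContDiff ℝ 1 F) :
    IsOpenMap F := by
  obtain ⟨σ, hσ, hdet⟩ := hvol
  refine isOpenMap_of_det_fderiv_ne_zero hF1 fun x h => ?_
  have := hdet x
  rw [h, abs_zero] at this
  linarith

end Dynamics

/-- **Internal Radius Growing property.** If f satisfies the Main Theorem hypotheses,
then there is R₀ > 0 such that every nonempty open set U contains a point x for which
some iterate f^K(U) contains the ball of radius R₀ around f^K(x). -/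
theorem irg_property {n : ℕ} (r : ℕ) (hr : 1 ≤ r)
    (f : Torus n → Torus n) (F : Rn n → Rn n) (hsmooth : ContDiff ℝ r F)
    (U0 U1 : Set (Torus n)) (δ0 : ℝ)
    (hyp : MainHyp f F U0 U1 δ0) :
    ∃ R0 > (0 : ℝ), ∀ U : Set (Torus n), IsOpen U → U.Nonempty →
      ∃ x ∈ U, ∃ K : ℕ, Metric.ball (f^[K] x) R0 ⊆ f^[K] '' U := by
  have hF1 : ContDiff ℝ 1 F := hsmooth.of_le (by exact_mod_cast hr)
  obtain ⟨p, hp⟩ := hyp.exists_forall_iterate_mem_compl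
  obtain ⟨μ, hμ, ρ, hρ, hstep⟩ :=
    hyp.expandingOff.exists_closedBall_subset_image hyp.isLift hF1
  refine ⟨ρ / (√n + 1), by positivity, fun U hU hUne => ?_⟩
  obtain ⟨_, ⟨m, hm⟩, hwU⟩ := (hyp.preDense p).exists_mem_open hU hUne
  obtain ⟨w, rfl⟩ := proj_surjective (n := n) ‹_›
  obtain ⟨ε, hε, hεU⟩ := Metric.isOpen_iff.1 (hU.preimage lipschitzWith_proj.continuous) w hwU
  obtain ⟨s, hs, hsε⟩ := nhds_basis_closedBall.mem_iff.1
    ((hyp.volExp.isOpenMap hF1).iterate m |>.image_mem_nhds (ball_mem_nhds w hε))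
  have horbit : ∀ i, proj (F^[i] (F^[m] w)) ∈ U0ᶜ := fun i => by
    rw [hyp.isLift.iterate, hyp.isLift.iterate, hm]; exact hp i
  obtain ⟨j, hj⟩ := exists_closedBall_subset_image_iterate hμ hstep horbit
    (lt_min hs hρ) (min_le_right s ρ)
  have hR : √n * (ρ / (√n + 1)) ≤ ρ := by
    rw [mul_div_assoc']; exact div_le_of_le_mul₀ (by positivity) hρ.le (by nlinarith)
  refine ⟨proj w, hwU, j + m, ?_⟩
  calc ball (f^[j + m] (proj w)) (ρ / (√n + 1))
      = ball (proj (F^[j] (F^[m] w))) (ρ / (√n + 1)) := by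
        rw [hyp.isLift.iterate, hyp.isLift.iterate, iterate_add_apply]
    _ ⊆ proj '' closedBall (F^[j] (F^[m] w)) ρ :=
        (ball_proj_subset_image_closedBall _).trans (image_mono (closedBall_subset_closedBall hR))
    _ ⊆ proj '' (F^[j + m] '' ball w ε) := by
        rw [iterate_add, image_comp]
        exact image_mono (hj.trans (image_mono ((closedBall_subset_closedBall
          (min_le_left _ _)).trans hsε)))
    _ = f^[j + m] '' (proj '' ball w ε) := Semiconj.set_image (hyp.isLift.iterate _) _
    _ ⊆ f^[j + m] '' U := image_mono (image_subset_iff.2 hεU)
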